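/- Suppose Q_{a,b,w} < Q_{x,u,w} in 𝓠^J (the two elements having the same W^J-component w). Then there exist r ∈ W^J_max and s ∈ W_J with (r,s,w) ∈ 𝓘^J such that Q_{a,b,w} ≤ Q_{r,s,w} ⋖ Q_{x,u,w}. -/

import Mathlib

namespace TNNFlag

open Classical

variable {B : Type*} {W : Type*} [Group W] {M : CoxeterMatrix B}

/-- Bruhat order on a Coxeter group, via the subword property: `u ≤ w` iff some reduced word
for `w` contains a sublist that is a reduced word for `u`. -/
def bruhatLE (cs : CoxeterSystem M W) (u w : W) : Prop :=
  ∃ ω : List B, cs.IsReduced ω ∧ cs.wordProd ω = w ∧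
    ∃ ω' : List B, ω'.Sublist ω ∧ cs.IsReduced ω' ∧ cs.wordProd ω' = u

/-- Strict Bruhat order. -/
def bruhatLT (cs : CoxeterSystem M W) (u w : W) : Prop :=
  bruhatLE cs u w ∧ u ≠ w

/-- Bruhat covering: `u ⋖ w`, i.e. `u < w` and `ℓ(w) = ℓ(u) + 1`. -/
def bruhatCov (cs : CoxeterSystem M W) (u w : W) : Prop :=
  bruhatLT cs u w ∧ cs.length w = cs.length u + 1

/-- The standard parabolic subgroup `W_J` generated by the simple reflections `s_j`, `j ∈ J`. -/
def parabolic (cs : CoxeterSystem M W) (J : Set B) : Subgroup W :=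
  Subgroup.closure {w | ∃ j ∈ J, w = cs.simple j}

/-- `W^J`: the set of minimal-length representatives of the cosets `W/W_J`. -/
def minReps (cs : CoxeterSystem M W) (J : Set B) : Set W :=
  {w | ∀ v ∈ parabolic cs J, cs.length w ≤ cs.length (w * v)}

/-- `u₀` is the longest element of the (finite) parabolic subgroup `W_J`. -/
def IsLongest (cs : CoxeterSystem M W) (J : Set B) (u₀ : W) : Prop :=
  u₀ ∈ parabolic cs J ∧ ∀ v ∈ parabolic cs J, cs.length v ≤ cs.length u₀

/-- `W^J_max = {w·u₀ : w ∈ W^J}`: maximal-length coset representatives of `W/W_J`. -/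
def maxReps (cs : CoxeterSystem M W) (J : Set B) (u₀ : W) : Set W :=
  {x | ∃ w ∈ minReps cs J, x = w * u₀}

/-- The index set `𝓘^J` of triples `(x, u, w) ∈ W^J_max × W_J × W^J` with `x ≤ wu`. -/
def IndexSet (cs : CoxeterSystem M W) (J : Set B) (u₀ : W) : Set (W × W × W) :=
  {t | t.1 ∈ maxReps cs J u₀ ∧ t.2.1 ∈ parabolic cs J ∧ t.2.2 ∈ minReps cs J ∧
    bruhatLE cs t.1 (t.2.2 * t.2.1)}

/-- The order relation between cells: `Q_{a,b,c} ≤ Q_{x,u,w}` iff the triples are equal or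
there exist `b₁, b₂ ∈ W_J` with `b = b₁b₂`, `ℓ(b) = ℓ(b₁) + ℓ(b₂)` and
`xu⁻¹ ≤ ab₂⁻¹ ≤ cb₁ ≤ w` in Bruhat order. Here `t = (a,b,c)` and `t' = (x,u,w)`. -/
def cellLE (cs : CoxeterSystem M W) (J : Set B) (t t' : W × W × W) : Prop :=
  t = t' ∨
    ∃ b₁ b₂ : W, b₁ ∈ parabolic cs J ∧ b₂ ∈ parabolic cs J ∧ t.2.1 = b₁ * b₂ ∧
      cs.length t.2.1 = cs.length b₁ + cs.length b₂ ∧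
      bruhatLE cs (t'.1 * t'.2.1⁻¹) (t.1 * b₂⁻¹) ∧
      bruhatLE cs (t.1 * b₂⁻¹) (t.2.2 * b₁) ∧
      bruhatLE cs (t.2.2 * b₁) t'.2.2

/-- The order of `𝓠^J`, on `Option (W × W × W)`, where `none` is the least element `0̂` and
`some (x,u,w)` is the cell `Q_{x,u,w}`. -/
def QLE (cs : CoxeterSystem M W) (J : Set B) :
    Option (W × W × W) → Option (W × W × W) → Prop
  | none, _ => True
  | some _, none => False
  | some t, some t' => cellLE cs J t t'

/-- Membership in `𝓠^J`: `0̂` together with the cells indexed by `𝓘^J`. -/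
def Qmem (cs : CoxeterSystem M W) (J : Set B) (u₀ : W) : Option (W × W × W) → Prop
  | none => True
  | some t => t ∈ IndexSet cs J u₀

/-- Strict order of `𝓠^J`. -/
def QLT (cs : CoxeterSystem M W) (J : Set B) (p q : Option (W × W × W)) : Prop :=
  QLE cs J p q ∧ p ≠ q

/-- Covering relation of `𝓠^J`. -/
def QCov (cs : CoxeterSystem M W) (J : Set B) (u₀ : W) (p q : Option (W × W × W)) : Prop :=
  Qmem cs J u₀ p ∧ Qmem cs J u₀ q ∧ QLT cs J p q ∧
    ∀ z, Qmem cs J u₀ z → QLT cs J p z → QLT cs J z q → False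

/-- The rank function of `𝓠^J`: `ρ(0̂) = 0` and `ρ(Q_{x,u,w}) = ℓ(wu) - ℓ(x) + 1`. -/
noncomputable def Qrank (cs : CoxeterSystem M W) : Option (W × W × W) → ℕ
  | none => 0
  | some t => cs.length (t.2.2 * t.2.1) - cs.length t.1 + 1

end TNNFlag
namespace TNNFlag

variable {B : Type*} {W : Type*} [Group W] {M : CoxeterMatrix B}

open CoxeterSystem List
open scoped Classical

section StrongExchange

variable (cs : CoxeterSystem M W)

private lemma simple_conj_eq_iff (i : B) (x y : W) :
    cs.simple i * x * cs.simple i = y ↔ x = cs.simple i * y * cs.simple i := by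
  constructor
  · rintro rfl
    simp [mul_assoc, cs.simple_mul_simple_self, cs.simple_mul_simple_cancel_left]
  · rintro rfl
    simp [mul_assoc, cs.simple_mul_simple_self, cs.simple_mul_simple_cancel_left]

private lemma simple_conj_eq_simple_iff (i : B) (t : W) :
    cs.simple i * t * cs.simple i = cs.simple i ↔ t = cs.simple i := by
  rw [simple_conj_eq_iff]
  simp [cs.simple_mul_simple_self, cs.simple_mul_simple_cancel_left]

private noncomputable def phiFun (i : B) : W × ZMod 2 → W × ZMod 2 :=
  fun p => (cs.simple i * p.1 * cs.simple i, p.2 + if p.1 = cs.simple i then 1 else 0)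

private lemma phiFun_invol (i : B) (p : W × ZMod 2) : phiFun cs i (phiFun cs i p) = p := by
  obtain ⟨t, e⟩ := p
  unfold phiFun
  dsimp only
  refine Prod.ext ?_ ?_
  · simp [mul_assoc, cs.simple_mul_simple_self, cs.simple_mul_simple_cancel_left]
  · dsimp only
    simp only [simple_conj_eq_simple_iff]
    have h2 : (1 : ZMod 2) + 1 = 0 := by decide
    by_cases h : t = cs.simple i
    · simp [h, add_assoc, h2]
    · simp [h]

private noncomputable def phi (i : B) : Equiv.Perm (W × ZMod 2) :=
  ⟨phiFun cs i, phiFun cs i, phiFun_invol cs i, phiFun_invol cs i⟩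

private lemma phi_liftable : M.IsLiftable (phi cs) := by
  intro i i'
  set a := cs.simple i with ha
  set b := cs.simple i' with hb
  set g : W := a * b with hg
  have hginv : g⁻¹ = b * a := by
    rw [hg, mul_inv_rev, ha, hb, inv_simple, inv_simple]
  have hbg1 : b * g = g⁻¹ * b := by
    rw [hginv, hg, mul_assoc]
  have hbg : ∀ k : ℕ, b * g ^ k = g⁻¹ ^ k * b := by
    intro k
    induction k with
    | zero => simp
    | succ k ih =>
      rw [pow_succ, pow_succ, ← mul_assoc, ih, mul_assoc, hbg1, ← mul_assoc]
  have hpsi : ∀ (x : W) (d : ZMod 2), (phi cs i * phi cs i') (x, d) =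
      (g * x * g⁻¹, d + ((if x = b then 1 else 0) + (if x = g⁻¹ * b then 1 else 0))) := by
    intro x d
    show phiFun cs i (phiFun cs i' (x, d)) = _
    unfold phiFun
    dsimp only
    refine Prod.ext ?_ ?_
    · dsimp only
      rw [hginv, hg]
      simp [mul_assoc]
      rw [ha, hb]
    · dsimp only
      have hcond : (b * x * b = a) ↔ (x = g⁻¹ * b) := by
        rw [hb, simple_conj_eq_iff, ← hb, hginv, mul_assoc]
      rw [← hb, ← ha]
      simp only [hcond, add_assoc]
  have hmain : ∀ (k : ℕ) (t : W) (e : ZMod 2),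
      ((phi cs i * phi cs i') ^ k) (t, e) =
        (g ^ k * t * (g ^ k)⁻¹,
          e + ∑ q ∈ Finset.range (2 * k), (if t = g⁻¹ ^ q * b then (1 : ZMod 2) else 0)) := by
    intro k
    induction k with
    | zero => intro t e; simp
    | succ k ih =>
      intro t e
      have hpow : (phi cs i * phi cs i') ^ (k + 1)
          = (phi cs i * phi cs i') * (phi cs i * phi cs i') ^ k := pow_succ' _ _
      rw [hpow, Equiv.Perm.mul_apply, ih, hpsi]
      have hc1 : (g ^ k * t * (g ^ k)⁻¹ = b) ↔ (t = g⁻¹ ^ (2 * k) * b) := by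
        have hx : (g ^ k)⁻¹ * b * g ^ k = g⁻¹ ^ (2 * k) * b := by
          rw [mul_assoc, hbg k, two_mul, pow_add, ← inv_pow, mul_assoc]
        constructor
        · intro h
          rw [← hx, ← h]
          group
        · intro h
          rw [← hx] at h
          rw [h]
          group
      have hc2 : (g ^ k * t * (g ^ k)⁻¹ = g⁻¹ * b) ↔ (t = g⁻¹ ^ (2 * k + 1) * b) := by
        have hx : (g ^ k)⁻¹ * (g⁻¹ * b) * g ^ k = g⁻¹ ^ (2 * k + 1) * b := by
          rw [mul_assoc, mul_assoc, hbg k, two_mul]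
          rw [pow_add, pow_add, pow_one, ← inv_pow]
          group
        constructor
        · intro h
          rw [← hx, ← h]
          group
        · intro h
          rw [← hx] at h
          rw [h]
          group
      refine Prod.ext ?_ ?_
      · dsimp only
        rw [pow_succ' g]
        group
      · dsimp only
        simp only [hc1, hc2]
        have hsplit : (2 * (k + 1)) = 2 * k + 1 + 1 := by ring
        rw [hsplit, Finset.sum_range_succ, Finset.sum_range_succ]
        ring
  show (phi cs i * phi cs i') ^ M.M i i' = 1
  set m := M.M i i' with hm
  apply Equiv.ext
  rintro ⟨t, e⟩
  rw [hmain m t e]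
  have hgm : g ^ m = 1 := by
    rw [hg, ha, hb, hm]
    exact cs.simple_mul_simple_pow i i'
  have hginvm : g⁻¹ ^ m = 1 := by
    rw [inv_pow, hgm, inv_one]
  have hsum : ∑ q ∈ Finset.range (2 * m), (if t = g⁻¹ ^ q * b then (1 : ZMod 2) else 0) = 0 := by
    have h2m : 2 * m = m + m := by ring
    rw [h2m, Finset.sum_range_add]
    have hper : ∀ q, (if t = g⁻¹ ^ (m + q) * b then (1 : ZMod 2) else 0)
        = (if t = g⁻¹ ^ q * b then (1 : ZMod 2) else 0) := by
      intro q
      rw [pow_add, hginvm, one_mul]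
    simp only [hper]
    have : ∀ x : ZMod 2, x + x = 0 := by decide
    exact this _
  rw [hgm, hsum]
  simp

private noncomputable def bigPhi : W →* Equiv.Perm (W × ZMod 2) := cs.lift ⟨phi cs, phi_liftable cs⟩

private lemma bigPhi_simple (i : B) : bigPhi cs (cs.simple i) = phi cs i :=
  cs.lift_apply_simple (phi_liftable cs) i

private lemma bigPhi_wordProd (ω : List B) (t : W) (e : ZMod 2) :
    bigPhi cs (cs.wordProd ω) (t, e) =
      (cs.wordProd ω * t * (cs.wordProd ω)⁻¹,
        e + (((cs.rightInvSeq ω).count t : ℕ) : ZMod 2)) := by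
  induction ω generalizing t e with
  | nil => simp [bigPhi]
  | cons i ω ih =>
    rw [cs.wordProd_cons, map_mul, Equiv.Perm.mul_apply, ih, bigPhi_simple]
    show phiFun cs i _ = _
    unfold phiFun
    dsimp only
    have hris : cs.rightInvSeq (i :: ω) =
        ((cs.wordProd ω)⁻¹ * cs.simple i * cs.wordProd ω) :: cs.rightInvSeq ω := rfl
    rw [hris, List.count_cons]
    refine Prod.ext ?_ ?_
    · dsimp only
      rw [mul_inv_rev, inv_simple]
      simp [mul_assoc]
    · dsimp only
      have hcond : (cs.wordProd ω * t * (cs.wordProd ω)⁻¹ = cs.simple i)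
          ↔ (t = (cs.wordProd ω)⁻¹ * cs.simple i * cs.wordProd ω) := by
        constructor
        · intro h
          rw [← h]
          group
        · intro h
          rw [h]
          group
      simp only [hcond]
      push_cast
      have hflip : (((cs.wordProd ω)⁻¹ * cs.simple i * cs.wordProd ω == t) = true)
          ↔ (t = (cs.wordProd ω)⁻¹ * cs.simple i * cs.wordProd ω) := by
        constructor
        · intro h
          exact (beq_iff_eq.mp h).symm
        · intro h
          exact beq_iff_eq.mpr h.symm
      simp only [hflip, add_assoc]

private noncomputable def invCount (w t : W) : ZMod 2 := (bigPhi cs w (t, 0)).2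

private lemma invCount_word (ω : List B) (t : W) :
    invCount cs (cs.wordProd ω) t = (((cs.rightInvSeq ω).count t : ℕ) : ZMod 2) := by
  rw [invCount, bigPhi_wordProd]
  exact zero_add _

private lemma bigPhi_apply (v t : W) (e : ZMod 2) :
    bigPhi cs v (t, e) = (v * t * v⁻¹, e + invCount cs v t) := by
  obtain ⟨ω, rfl⟩ := cs.wordProd_surjective v
  rw [bigPhi_wordProd, invCount_word]

private lemma invCount_mul (v v' t : W) :
    invCount cs (v * v') t = invCount cs v' t + invCount cs v (v' * t * v'⁻¹) := by
  have h1 : bigPhi cs (v * v') (t, 0) = bigPhi cs v (bigPhi cs v' (t, 0)) := by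
    rw [map_mul]
    rfl
  rw [invCount, h1, bigPhi_apply cs v', bigPhi_apply cs v, zero_add]

private lemma invCount_simple (i : B) (t : W) :
    invCount cs (cs.simple i) t = if t = cs.simple i then 1 else 0 := by
  have h := invCount_word cs [i] t
  rw [cs.wordProd_singleton] at h
  rw [h, cs.rightInvSeq_singleton]
  by_cases ht : t = cs.simple i
  · simp [ht]
  · have : cs.simple i ≠ t := fun hh => ht hh.symm
    simp [ht, List.count_singleton', this]

private lemma invCount_of_not_lt {w t : W} (h : ¬ cs.length (w * t) < cs.length w) :
    invCount cs w t = 0 := by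
  obtain ⟨ω, hred, rfl⟩ := cs.exists_reduced_word' w
  rw [invCount_word]
  have hmem : t ∉ cs.rightInvSeq ω := by
    intro hmem
    exact h (cs.isRightInversion_of_mem_rightInvSeq hred hmem).2
  rw [List.count_eq_zero_of_not_mem hmem]
  simp

private lemma invCount_self {t : W} (ht : cs.IsReflection t) : invCount cs t t = 1 := by
  obtain ⟨y, i, rfl⟩ := ht
  suffices h : ∀ (n : ℕ) (y : W) (i : B), cs.length y ≤ n →
      invCount cs (y * cs.simple i * y⁻¹) (y * cs.simple i * y⁻¹) = 1 by
    exact h (cs.length y) y i le_rfl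
  intro n
  induction n with
  | zero =>
    intro y i hy
    have : y = 1 := cs.length_eq_zero_iff.mp (Nat.le_zero.mp hy)
    subst this
    simp [invCount_simple]
  | succ n ihn =>
    intro y i hy
    by_cases hy1 : y = 1
    · subst hy1
      simp [invCount_simple]
    · obtain ⟨j, hj⟩ := cs.exists_leftDescent_of_ne_one hy1
      set y' := cs.simple j * y with hy'
      set t := y * cs.simple i * y⁻¹ with htdef
      set t' := y' * cs.simple i * y'⁻¹ with ht'def
      have ht : cs.IsReflection t := ⟨y, i, rfl⟩
      have ht' : cs.IsReflection t' := ⟨y', i, rfl⟩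
      have hty : t = cs.simple j * t' * cs.simple j := by
        rw [ht'def, hy', mul_inv_rev, inv_simple, htdef]
        simp only [mul_assoc, cs.simple_mul_simple_cancel_left, cs.simple_mul_simple_self,
          mul_one]
      by_cases htj : t = cs.simple j
      · rw [htj, invCount_simple]
        simp
      · have hjtj : cs.simple j * t * cs.simple j = t' := by
          rw [hty]
          simp only [mul_assoc]
          rw [cs.simple_mul_simple_cancel_left]
          simp only [← mul_assoc]
          rw [cs.simple_mul_simple_cancel_right]
        have ht'j : t' ≠ cs.simple j := by
          intro hh
          apply htj
          rw [hty, hh, cs.simple_mul_simple_self, one_mul]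
        have hsplit : t = cs.simple j * (t' * cs.simple j) := by
          rw [hty, mul_assoc]
        have hconj : t' * cs.simple j * t * (t' * cs.simple j)⁻¹ = t' := by
          rw [mul_inv_rev, inv_simple, ht'.inv]
          have h9 : t' * cs.simple j * t * (cs.simple j * t')
              = t' * (cs.simple j * t * cs.simple j) * t' := by
            simp only [mul_assoc]
          rw [h9, hjtj, ht'.mul_self, one_mul]
        have hmul1 : invCount cs t t = invCount cs (t' * cs.simple j) t
            + invCount cs (cs.simple j) (t' * cs.simple j * t * (t' * cs.simple j)⁻¹) := by
          nth_rewrite 1 [hsplit]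
          exact invCount_mul cs (cs.simple j) (t' * cs.simple j) t
        have hmul2 : invCount cs (t' * cs.simple j) t = invCount cs (cs.simple j) t
            + invCount cs t' (cs.simple j * t * (cs.simple j)⁻¹) :=
          invCount_mul cs t' (cs.simple j) t
        have hlen : cs.length y' ≤ n := by
          have : cs.length y' < cs.length y := hj
          omega
        rw [hmul1, hmul2, hconj, inv_simple, hjtj, invCount_simple, invCount_simple,
          if_neg htj, if_neg ht'j, ihn y' i hlen]
        simp

private lemma invCount_of_lt {w t : W} (ht : cs.IsReflection t)
    (h : cs.length (w * t) < cs.length w) : invCount cs w t = 1 := by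
  have hw : (w * t) * t = w := by rw [mul_assoc, ht.mul_self, mul_one]
  have h1 : invCount cs ((w * t) * t) t = invCount cs t t + invCount cs (w * t) (t * t * t⁻¹) :=
    invCount_mul cs (w * t) t t
  have h2 : t * t * t⁻¹ = t := by rw [ht.mul_self, one_mul, ht.inv]
  have h3 : invCount cs (w * t) t = 0 := by
    apply invCount_of_not_lt
    rw [hw]
    omega
  rw [hw] at h1
  rw [h1, h2, h3, invCount_self cs ht, add_zero]

theorem strongExchange (ω : List B) {t : W} (ht : cs.IsReflection t)
    (h : cs.length (cs.wordProd ω * t) < cs.length (cs.wordProd ω)) :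
    ∃ k, k < ω.length ∧ cs.wordProd ω * t = cs.wordProd (ω.eraseIdx k) := by
  have h1 : invCount cs (cs.wordProd ω) t = 1 := invCount_of_lt cs ht h
  rw [invCount_word] at h1
  have hmem : t ∈ cs.rightInvSeq ω := by
    by_contra hmem
    rw [List.count_eq_zero_of_not_mem hmem] at h1
    simp at h1
  obtain ⟨k, hk, hkt⟩ := List.mem_iff_getElem.mp hmem
  refine ⟨k, ?_, ?_⟩
  · have := cs.length_rightInvSeq ω
    omega
  · rw [← cs.wordProd_mul_getD_rightInvSeq ω k]
    congr 1
    rw [List.getD_eq_getElem _ 1 hk, hkt]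

end StrongExchange

section Bruhat

variable (cs : CoxeterSystem M W)

private lemma isReduced_nil : cs.IsReduced ([] : List B) := by
  simp [CoxeterSystem.IsReduced]

/-- Deletion condition. -/
private lemma exists_shorter_of_not_reduced :
    ∀ (ω : List B), ¬ cs.IsReduced ω → ∃ σ : List B, σ.Sublist ω ∧ σ.length + 2 = ω.length ∧
      cs.wordProd σ = cs.wordProd ω := by
  intro ω
  induction ω using List.reverseRecOn with
  | nil => intro h; exact absurd (isReduced_nil cs) h
  | append_singleton ω₁ i ih =>
    intro h
    by_cases h₁ : cs.IsReduced ω₁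
    · have hlt : cs.length (cs.wordProd ω₁ * cs.simple i) < cs.length (cs.wordProd ω₁) := by
        rcases cs.length_mul_simple (cs.wordProd ω₁) i with hup | hdown
        · exfalso
          apply h
          unfold CoxeterSystem.IsReduced
          rw [cs.wordProd_append, cs.wordProd_singleton, hup, h₁]
          simp
        · have hne := cs.length_mul_simple_ne (cs.wordProd ω₁) i
          omega
      obtain ⟨k, hk, hke⟩ := strongExchange cs ω₁ (cs.isReflection_simple i) hlt
      refine ⟨ω₁.eraseIdx k, ?_, ?_, ?_⟩
      · exact (List.eraseIdx_sublist ω₁ k).trans (List.sublist_append_left ω₁ [i])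
      · have := List.length_eraseIdx_add_one hk
        simp only [List.length_append, List.length_singleton]
        omega
      · rw [cs.wordProd_append, cs.wordProd_singleton, ← hke]
    · obtain ⟨σ₁, hs, hlen, hprod⟩ := ih h₁
      refine ⟨σ₁ ++ [i], hs.append (List.Sublist.refl [i]), ?_, ?_⟩
      · simp only [List.length_append, List.length_singleton]
        omega
      · rw [cs.wordProd_append, cs.wordProd_append, hprod]

/-- Every word has a reduced sublist with the same product. -/
private lemma exists_reduced_sublist (ω : List B) :
    ∃ σ : List B, σ.Sublist ω ∧ cs.IsReduced σ ∧ cs.wordProd σ = cs.wordProd ω := by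
  suffices h : ∀ n (ω : List B), ω.length ≤ n →
      ∃ σ : List B, σ.Sublist ω ∧ cs.IsReduced σ ∧ cs.wordProd σ = cs.wordProd ω by
    exact h ω.length ω le_rfl
  intro n
  induction n with
  | zero =>
    intro ω h
    have : ω = [] := List.eq_nil_of_length_eq_zero (Nat.le_zero.mp h)
    subst this
    exact ⟨[], List.Sublist.refl _, isReduced_nil cs, rfl⟩
  | succ n ih =>
    intro ω h
    by_cases hred : cs.IsReduced ω
    · exact ⟨ω, List.Sublist.refl ω, hred, rfl⟩
    · obtain ⟨σ, hs, hlen, hprod⟩ := exists_shorter_of_not_reduced cs ω hred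
      obtain ⟨σ', hs', hred', hprod'⟩ := ih σ (by omega)
      exact ⟨σ', hs'.trans hs, hred', by rw [hprod', hprod]⟩

/-- One step in a Bruhat chain. -/
def RStep (v w : W) : Prop :=
  ∃ t, cs.IsReflection t ∧ w = v * t ∧ cs.length v < cs.length w

/-- Bruhat order as reflexive-transitive closure of reflection steps. -/
def Rle : W → W → Prop := Relation.ReflTransGen (RStep cs)

private lemma Rle.len_le {v w : W} (h : Rle cs v w) : cs.length v ≤ cs.length w := by
  induction h with
  | refl => exact le_rfl
  | tail _ hstep ih =>
    obtain ⟨t, _, _, hlt⟩ := hstep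
    omega

/-- Subword property, hard direction: a reduced subword of a reduced word gives a Bruhat chain. -/
private lemma rle_of_sublist_aux : ∀ n (ω σ : List B), ω.length ≤ n → cs.IsReduced ω →
    cs.IsReduced σ → σ.Sublist ω → Rle cs (cs.wordProd σ) (cs.wordProd ω) := by
  intro n
  induction n using Nat.strong_induction_on with
  | _ n IH =>
  intro ω σ hlen hω hσ hsub
  rcases ω.eq_nil_or_concat with rfl | ⟨ω₁, i, rfl⟩
  · have : σ = [] := List.sublist_nil.mp hsub
    subst this
    exact Relation.ReflTransGen.refl
  rw [List.concat_eq_append] at hsub hω hlen ⊢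
  have hω₁ : cs.IsReduced ω₁ := by
    have h2 := CoxeterSystem.IsReduced.take hω ω₁.length
    rwa [List.take_left] at h2
  have hlenω : (ω₁ ++ [i]).length = ω₁.length + 1 := by simp
  have hlω : cs.length (cs.wordProd (ω₁ ++ [i])) = ω₁.length + 1 := by
    rw [hω, hlenω]
  have hlω₁ : cs.length (cs.wordProd ω₁) = ω₁.length := hω₁
  have hstep : RStep cs (cs.wordProd ω₁) (cs.wordProd (ω₁ ++ [i])) := by
    refine ⟨cs.simple i, cs.isReflection_simple i, ?_, ?_⟩
    · rw [cs.wordProd_append, cs.wordProd_singleton]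
    · omega
  -- the lifting machinery
  have steplift : ∀ y y', RStep cs y y' → cs.length y' < n →
      Rle cs (if cs.length y < cs.length (y * cs.simple i) then y * cs.simple i else y)
        (if cs.length y' < cs.length (y' * cs.simple i) then y' * cs.simple i else y') := by
    rintro y y' ⟨t, ht, rfl, hlt⟩ hn'
    by_cases hy : cs.length y < cs.length (y * cs.simple i) <;>
      by_cases hy' : cs.length (y * t) < cs.length (y * t * cs.simple i)
    · rw [if_pos hy, if_pos hy']
      apply Relation.ReflTransGen.single
      refine ⟨cs.simple i * t * cs.simple i, ?_, ?_, ?_⟩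
      · have := ht.conj (cs.simple i)
        rwa [inv_simple] at this
      · simp only [mul_assoc]
        rw [cs.simple_mul_simple_cancel_left]
      · have h1 : cs.length (y * cs.simple i) ≤ cs.length y + 1 := by
          have := cs.length_mul_le y (cs.simple i)
          rwa [cs.length_simple] at this
        omega
    · -- hard case: ascent at y, descent at y' = y * t
      rw [if_pos hy, if_neg hy']
      have hd : cs.length ((y * t) * cs.simple i) < cs.length (y * t) := by
        have hne := cs.length_mul_simple_ne (y * t) i
        omega
      obtain ⟨τ, hτred, hτ⟩ := cs.exists_reduced_word' (y * t * cs.simple i)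
      have hρprod : cs.wordProd (τ ++ [i]) = y * t := by
        rw [cs.wordProd_append, cs.wordProd_singleton, ← hτ, mul_assoc,
          cs.simple_mul_simple_self, mul_one]
      have hτlen : cs.length (y * t * cs.simple i) = τ.length := by
        rw [hτ]; exact hτred
      have hytlen : cs.length (y * t) = τ.length + 1 := by
        rcases cs.length_mul_simple (y * t) i with hup | hdown
        · omega
        · omega
      have hρred : cs.IsReduced (τ ++ [i]) := by
        unfold CoxeterSystem.IsReduced
        rw [hρprod]
        simp only [List.length_append, List.length_singleton]
        omega
      have hexch : cs.length (cs.wordProd (τ ++ [i]) * t) < cs.length (cs.wordProd (τ ++ [i])) := by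
        rw [hρprod, mul_assoc, ht.mul_self, mul_one]
        exact hlt
      obtain ⟨k, hk, hke⟩ := strongExchange cs (τ ++ [i]) ht hexch
      have hy_eq : y = cs.wordProd ((τ ++ [i]).eraseIdx k) := by
        rw [← hke, hρprod, mul_assoc, ht.mul_self, mul_one]
      by_cases hkτ : k < τ.length
      · have herase : (τ ++ [i]).eraseIdx k = τ.eraseIdx k ++ [i] :=
          List.eraseIdx_append_of_lt_length hkτ [i]
        have hys : y * cs.simple i = cs.wordProd (τ.eraseIdx k) := by
          rw [hy_eq, herase, cs.wordProd_append, cs.wordProd_singleton, mul_assoc,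
            cs.simple_mul_simple_self, mul_one]
        obtain ⟨σ₀, hσ₀sub, hσ₀red, hσ₀prod⟩ := exists_reduced_sublist cs (τ.eraseIdx k)
        have hsubρ : σ₀.Sublist (τ ++ [i]) :=
          (hσ₀sub.trans (List.eraseIdx_sublist τ k)).trans (List.sublist_append_left τ [i])
        have hlenρ : (τ ++ [i]).length ≤ cs.length (y * t) := by
          simp only [List.length_append, List.length_singleton]
          omega
        have hmain := IH (cs.length (y * t)) hn' (τ ++ [i]) σ₀ hlenρ hρred hσ₀red hsubρ
        rw [hσ₀prod, ← hys, hρprod] at hmain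
        exact hmain
      · have hk' : k = τ.length := by
          simp only [List.length_append, List.length_singleton] at hk
          omega
        have herase : (τ ++ [i]).eraseIdx k = τ := by
          rw [hk', List.eraseIdx_append_of_length_le le_rfl]
          simp
        have hyτ : y = cs.wordProd τ := by rw [hy_eq, herase]
        have h5 : y = y * t * cs.simple i := hyτ.trans hτ.symm
        have h6 : y * cs.simple i = y * t := by
          have h7 := congrArg (fun z => z * cs.simple i) h5
          simpa [mul_assoc, cs.simple_mul_simple_self] using h7
        rw [h6]
        exact Relation.ReflTransGen.refl
    · rw [if_neg hy, if_pos hy']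
      refine Relation.ReflTransGen.tail (Relation.ReflTransGen.single ⟨t, ht, rfl, hlt⟩) ?_
      exact ⟨cs.simple i, cs.isReflection_simple i, rfl, hy'⟩
    · rw [if_neg hy, if_neg hy']
      exact Relation.ReflTransGen.single ⟨t, ht, rfl, hlt⟩
  have chainlift : ∀ v v', Rle cs v v' → cs.length v' < n →
      Rle cs (if cs.length v < cs.length (v * cs.simple i) then v * cs.simple i else v)
        (if cs.length v' < cs.length (v' * cs.simple i) then v' * cs.simple i else v') := by
    intro v v' h
    induction h with
    | refl => intro _; exact Relation.ReflTransGen.refl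
    | @tail b c hab hbc ihb =>
      intro hn'
      have hbc_lt : cs.length b < cs.length c := by
        obtain ⟨t, _, heq, hlt⟩ := hbc
        exact hlt
      exact (ihb (by omega)).trans (steplift b c hbc hn')
  obtain ⟨σ₁, σ₂, rfl, hsub₁, hsub₂⟩ := List.sublist_append_iff.mp hsub
  rcases List.sublist_singleton.mp hsub₂ with rfl | rfl
  · rw [List.append_nil] at hσ ⊢
    have hn₁ : ω₁.length < n := by omega
    have h1 := IH ω₁.length hn₁ ω₁ σ₁ le_rfl hω₁ hσ hsub₁
    exact Relation.ReflTransGen.tail h1 hstep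
  · have hσ₁ : cs.IsReduced σ₁ := by
      have h2 := CoxeterSystem.IsReduced.take hσ σ₁.length
      rwa [List.take_left] at h2
    have hn₁ : ω₁.length < n := by omega
    have h1 := IH ω₁.length hn₁ ω₁ σ₁ le_rfl hω₁ hσ₁ hsub₁
    have h2 := chainlift (cs.wordProd σ₁) (cs.wordProd ω₁) h1 (by omega)
    have hσprod : cs.wordProd σ₁ * cs.simple i = cs.wordProd (σ₁ ++ [i]) := by
      rw [cs.wordProd_append, cs.wordProd_singleton]
    have hcondσ : cs.length (cs.wordProd σ₁) < cs.length (cs.wordProd σ₁ * cs.simple i) := by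
      rw [hσprod, hσ]
      have h3 : cs.length (cs.wordProd σ₁) ≤ σ₁.length := cs.length_wordProd_le σ₁
      simp only [List.length_append, List.length_singleton]
      omega
    have hcondω : cs.length (cs.wordProd ω₁) < cs.length (cs.wordProd ω₁ * cs.simple i) := by
      rw [cs.wordProd_append, cs.wordProd_singleton] at hlω
      rw [hlω, hlω₁]
      omega
    rw [if_pos hcondσ, if_pos hcondω] at h2
    rw [cs.wordProd_append, cs.wordProd_singleton, cs.wordProd_append, cs.wordProd_singleton]
    exact h2


private lemma rle_of_bruhatLE {u w : W} (h : bruhatLE cs u w) : Rle cs u w := by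
  obtain ⟨ω, hred, hπ, σ, hsub, hredσ, hπσ⟩ := h
  rw [← hπ, ← hπσ]
  exact rle_of_sublist_aux cs ω.length ω σ le_rfl hred hredσ hsub

private lemma sublist_of_rle : ∀ n (u w : W), cs.length w ≤ n → Rle cs u w →
    ∀ ω : List B, cs.IsReduced ω → cs.wordProd ω = w →
      ∃ σ : List B, σ.Sublist ω ∧ cs.IsReduced σ ∧ cs.wordProd σ = u := by
  intro n
  induction n with
  | zero =>
    intro u w hw h ω hred hπ
    rcases Relation.ReflTransGen.cases_tail h with heq | ⟨v, huv, t, ht, hwv, hlt⟩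
    · exact ⟨ω, List.Sublist.refl ω, hred, by rw [hπ, heq]⟩
    · omega
  | succ n ih =>
    intro u w hw h ω hred hπ
    rcases Relation.ReflTransGen.cases_tail h with heq | ⟨v, huv, t, ht, hwv, hlt⟩
    · exact ⟨ω, List.Sublist.refl ω, hred, by rw [hπ, heq]⟩
    · have hexch : cs.length (cs.wordProd ω * t) < cs.length (cs.wordProd ω) := by
        have hwt : cs.wordProd ω * t = v := by
          rw [hπ, hwv, mul_assoc, ht.mul_self, mul_one]
        rw [hwt, hπ]
        exact hlt
      obtain ⟨k, hk, hke⟩ := strongExchange cs ω ht hexch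
      have hv : cs.wordProd (ω.eraseIdx k) = v := by
        rw [← hke, hπ, hwv, mul_assoc, ht.mul_self, mul_one]
      obtain ⟨σ₀, hsub₀, hred₀, hprod₀⟩ := exists_reduced_sublist cs (ω.eraseIdx k)
      obtain ⟨σ, hs, hrs, hps⟩ := ih u v (by omega) huv σ₀ hred₀ (hprod₀.trans hv)
      exact ⟨σ, (hs.trans hsub₀).trans (List.eraseIdx_sublist ω k), hrs, hps⟩

lemma bruhatLE_refl (w : W) : bruhatLE cs w w := by
  obtain ⟨ω, hred, hπ⟩ := cs.exists_reduced_word' w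
  exact ⟨ω, hred, hπ.symm, ω, List.Sublist.refl ω, hred, hπ.symm⟩

lemma bruhatLE_trans {u v w : W} (h1 : bruhatLE cs u v) (h2 : bruhatLE cs v w) :
    bruhatLE cs u w := by
  obtain ⟨ω, hred, hπ, τ, hsub, hredτ, hπτ⟩ := h2
  have hr : Rle cs u v := rle_of_bruhatLE cs h1
  obtain ⟨σ, hs, hrs, hps⟩ := sublist_of_rle cs (cs.length v) u v le_rfl hr τ hredτ hπτ
  exact ⟨ω, hred, hπ, σ, hs.trans hsub, hrs, hps⟩

lemma bruhatLE_length_le {u w : W} (h : bruhatLE cs u w) : cs.length u ≤ cs.length w := by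
  obtain ⟨ω, hred, hπ, σ, hsub, hredσ, hπσ⟩ := h
  have h1 : cs.length u = σ.length := by rw [← hπσ]; exact hredσ
  have h2 : cs.length w = ω.length := by rw [← hπ]; exact hred
  rw [h1, h2]
  exact hsub.length_le

lemma bruhatLE_eq_of_length_ge {u w : W} (h : bruhatLE cs u w)
    (hl : cs.length w ≤ cs.length u) : u = w := by
  obtain ⟨ω, hred, hπ, σ, hsub, hredσ, hπσ⟩ := h
  have h1 : cs.length u = σ.length := by rw [← hπσ]; exact hredσ
  have h2 : cs.length w = ω.length := by rw [← hπ]; exact hred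
  have hlen : σ.length = ω.length := le_antisymm hsub.length_le (by omega)
  have : σ = ω := hsub.eq_of_length hlen
  rw [← hπσ, this, hπ]

end Bruhat

section Parabolic

variable (cs : CoxeterSystem M W) (J : Set B)

private lemma wordProd_mem_parabolic {ω : List B} (h : ∀ j ∈ ω, j ∈ J) :
    cs.wordProd ω ∈ parabolic cs J := by
  induction ω with
  | nil =>
    rw [cs.wordProd_nil]
    exact Subgroup.one_mem _
  | cons i ω ih =>
    rw [cs.wordProd_cons]
    refine Subgroup.mul_mem _ (Subgroup.subset_closure ⟨i, h i (by simp), rfl⟩) ?_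
    exact ih fun j hj => h j (by simp [hj])

private lemma exists_word_of_mem_parabolic {v : W} (h : v ∈ parabolic cs J) :
    ∃ ω : List B, (∀ j ∈ ω, j ∈ J) ∧ cs.wordProd ω = v := by
  induction h using Subgroup.closure_induction with
  | mem y hy =>
    obtain ⟨j, hjJ, rfl⟩ := hy
    exact ⟨[j], by simp [hjJ], cs.wordProd_singleton j⟩
  | one => exact ⟨[], by simp, cs.wordProd_nil⟩
  | mul y z hy hz ihy ihz =>
    obtain ⟨ω₁, h₁, rfl⟩ := ihy
    obtain ⟨ω₂, h₂, rfl⟩ := ihz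
    refine ⟨ω₁ ++ ω₂, ?_, cs.wordProd_append ω₁ ω₂⟩
    intro j hj
    rcases List.mem_append.mp hj with hj | hj
    · exact h₁ j hj
    · exact h₂ j hj
  | inv y hy ihy =>
    obtain ⟨ω, h₁, rfl⟩ := ihy
    refine ⟨ω.reverse, ?_, cs.wordProd_reverse ω⟩
    intro j hj
    exact h₁ j (List.mem_reverse.mp hj)

private lemma exists_reduced_word_of_mem_parabolic {v : W} (h : v ∈ parabolic cs J) :
    ∃ ω : List B, (∀ j ∈ ω, j ∈ J) ∧ cs.IsReduced ω ∧ cs.wordProd ω = v := by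
  obtain ⟨ω, hJ, hv⟩ := exists_word_of_mem_parabolic cs J h
  obtain ⟨σ, hsub, hred, hprod⟩ := exists_reduced_sublist cs ω
  exact ⟨σ, fun j hj => hJ j (hsub.subset hj), hred, hprod.trans hv⟩

private lemma minRep_length_add {c v : W} (hc : c ∈ minReps cs J) (hv : v ∈ parabolic cs J) :
    cs.length (c * v) = cs.length c + cs.length v := by
  suffices h : ∀ (n : ℕ) (v : W), v ∈ parabolic cs J → cs.length v ≤ n →
      cs.length (c * v) = cs.length c + cs.length v from h _ v hv le_rfl
  intro n
  induction n with
  | zero =>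
    intro v hv hvn
    have : v = 1 := cs.length_eq_zero_iff.mp (Nat.le_zero.mp hvn)
    subst this
    simp
  | succ n ih =>
    intro v hv hvn
    obtain ⟨ω, hωJ, hωred, hωv⟩ := exists_reduced_word_of_mem_parabolic cs J hv
    rcases ω.eq_nil_or_concat with heq | ⟨ω', j, heq⟩
    · rw [← hωv, heq]
      simp
    · subst heq
      rw [List.concat_eq_append] at hωJ hωred hωv
      have hω' : cs.IsReduced ω' := by
        have h2 := CoxeterSystem.IsReduced.take hωred ω'.length
        rwa [List.take_left] at h2
      have hjJ : j ∈ J := hωJ j (by simp)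
      have hv'par : cs.wordProd ω' ∈ parabolic cs J :=
        wordProd_mem_parabolic cs J (fun k hk => hωJ k (by simp [hk]))
      set v' := cs.wordProd ω' with hv'
      have hvv' : v = v' * cs.simple j := by
        rw [← hωv, cs.wordProd_append, cs.wordProd_singleton]
      have hlv : cs.length v = ω'.length + 1 := by
        rw [← hωv, hωred]
        simp
      have hlv' : cs.length v' = ω'.length := hω'
      have ihv' : cs.length (c * v') = cs.length c + cs.length v' :=
        ih v' hv'par (by omega)
      have hlv2 : cs.length (v' * cs.simple j) = ω'.length + 1 := by
        rw [← hvv']; exact hlv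
      rcases cs.length_mul_simple (c * v') j with hup | hdown
      · rw [hvv', ← mul_assoc, hup, ihv']
        omega
      · exfalso
        obtain ⟨α, hαred, hαc⟩ := cs.exists_reduced_word' c
        have hαlen : α.length = cs.length c := by rw [hαc]; exact hαred.symm
        have hβprod : cs.wordProd (α ++ ω') = c * v' := by
          rw [cs.wordProd_append, ← hαc, hv']
        have hβred : cs.IsReduced (α ++ ω') := by
          unfold CoxeterSystem.IsReduced
          rw [hβprod, ihv']
          simp only [List.length_append]
          omega
        have hexch : cs.length (cs.wordProd (α ++ ω') * cs.simple j)
            < cs.length (cs.wordProd (α ++ ω')) := by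
          rw [hβprod]
          omega
        obtain ⟨k, hk, hke⟩ := strongExchange cs (α ++ ω') (cs.isReflection_simple j) hexch
        by_cases hkα : k < α.length
        · have herase : (α ++ ω').eraseIdx k = α.eraseIdx k ++ ω' :=
            List.eraseIdx_append_of_lt_length hkα ω'
          have hkey : c * (v' * cs.simple j * v'⁻¹) = cs.wordProd (α.eraseIdx k) := by
            have h9 : cs.wordProd (α ++ ω') * cs.simple j
                = cs.wordProd (α.eraseIdx k) * v' := by
              rw [hke, herase, cs.wordProd_append, hv']
            have h10 : c * v' * cs.simple j = cs.wordProd (α.eraseIdx k) * v' := by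
              rw [← hβprod, h9]
            have h11 := congrArg (fun z => z * v'⁻¹) h10
            simpa [mul_assoc] using h11
          have hmemJ : v' * cs.simple j * v'⁻¹ ∈ parabolic cs J := by
            refine Subgroup.mul_mem _ (Subgroup.mul_mem _ hv'par ?_) (Subgroup.inv_mem _ hv'par)
            exact Subgroup.subset_closure ⟨j, hjJ, rfl⟩
          have hmin := hc _ hmemJ
          have hb : cs.length (cs.wordProd (α.eraseIdx k)) ≤ α.length - 1 := by
            have h12 := cs.length_wordProd_le (α.eraseIdx k)
            have h13 := List.length_eraseIdx_add_one hkα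
            omega
          rw [← hkey] at hb
          omega
        · have hk2 : α.length ≤ k := not_lt.mp hkα
          have herase : (α ++ ω').eraseIdx k = α ++ ω'.eraseIdx (k - α.length) :=
            List.eraseIdx_append_of_length_le hk2 ω'
          have hkey : v' * cs.simple j = cs.wordProd (ω'.eraseIdx (k - α.length)) := by
            have h9 : cs.wordProd (α ++ ω') * cs.simple j
                = c * cs.wordProd (ω'.eraseIdx (k - α.length)) := by
              rw [hke, herase, cs.wordProd_append, ← hαc]
            have h10 : c * (v' * cs.simple j)
                = c * cs.wordProd (ω'.eraseIdx (k - α.length)) := by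
              rw [← mul_assoc, ← hβprod]
              exact h9
            exact mul_left_cancel h10
          have hb : cs.length (v' * cs.simple j) ≤ ω'.length - 1 + 1 := by
            rw [hkey]
            have h12 := cs.length_wordProd_le (ω'.eraseIdx (k - α.length))
            have h13 : (ω'.eraseIdx (k - α.length)).length ≤ ω'.length :=
              (List.eraseIdx_sublist ω' (k - α.length)).length_le
            have h14 : k - α.length < ω'.length := by
              simp only [List.length_append] at hk
              omega
            have h15 := List.length_eraseIdx_add_one h14
            omega
          rw [← hvv'] at hb
          have h16 : k - α.length < ω'.length := by
            simp only [List.length_append] at hk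
            omega
          have h17 := List.length_eraseIdx_add_one h16
          have h18 := cs.length_wordProd_le (ω'.eraseIdx (k - α.length))
          rw [← hvv'] at hkey
          have : cs.length v ≤ ω'.length - 1 := by
            rw [hkey]
            omega
          omega

private lemma minRep_unique {c v : W} (hc : c ∈ minReps cs J) (hv : v ∈ parabolic cs J)
    (hcv : c * v ∈ minReps cs J) : v = 1 := by
  have h1 : cs.length (c * v) = cs.length c + cs.length v := minRep_length_add cs J hc hv
  have h2 : cs.length ((c * v) * v⁻¹) = cs.length (c * v) + cs.length v⁻¹ :=
    minRep_length_add cs J hcv (Subgroup.inv_mem _ hv)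
  rw [mul_inv_cancel_right] at h2
  have h3 : cs.length v⁻¹ = cs.length v := cs.length_inv v
  have : cs.length v = 0 := by omega
  exact cs.length_eq_zero_iff.mp this

end Parabolic


/-- If Q_{a,b,w} < Q_{x,u,w} in 𝓠^J (same W^J-component w), then there exist
r ∈ W^J_max and s ∈ W_J with (r,s,w) ∈ 𝓘^J such that Q_{a,b,w} ≤ Q_{r,s,w} ⋖ Q_{x,u,w}. -/
theorem exists_coatom_with_same_third
    (cs : CoxeterSystem M W) (J : Set B) (u₀ : W) (hu₀ : IsLongest cs J u₀)
    (a b x u w : W)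
    (habw : (a, b, w) ∈ IndexSet cs J u₀) (hxuw : (x, u, w) ∈ IndexSet cs J u₀)
    (hlt : QLT cs J (some (a, b, w)) (some (x, u, w))) :
    ∃ r s : W, r ∈ maxReps cs J u₀ ∧ s ∈ parabolic cs J ∧
      (r, s, w) ∈ IndexSet cs J u₀ ∧
      QLE cs J (some (a, b, w)) (some (r, s, w)) ∧
      QCov cs J u₀ (some (r, s, w)) (some (x, u, w)) := by
  classical
  obtain ⟨hle, hne⟩ := hlt
  have hne3 : (a, b, w) ≠ (x, u, w) := fun h => hne (by rw [h])
  have hwmin : w ∈ minReps cs J := hxuw.2.2.1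
  have hcore : ∀ r s x' u' : W, cellLE cs J (r, s, w) (x', u', w) →
      (r = x' ∧ s = u') ∨ (bruhatLE cs (x' * u'⁻¹) (r * s⁻¹) ∧ bruhatLE cs (r * s⁻¹) w) := by
    intro r s x' u' h
    rcases h with heq | ⟨b₁, b₂, hb₁, hb₂, hbb, _, h1, h2, h3⟩
    · exact Or.inl ⟨congrArg Prod.fst heq, congrArg (fun p => p.2.1) heq⟩
    · right
      have h3' : bruhatLE cs (w * b₁) w := h3
      have hlen2 : cs.length w ≤ cs.length (w * b₁) := hwmin b₁ hb₁
      have heqw : w * b₁ = w := bruhatLE_eq_of_length_ge cs h3' hlen2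
      have hb₁1 : b₁ = 1 := mul_left_cancel (heqw.trans (mul_one w).symm)
      have hb₂s : b₂ = s := by
        have h4 : s = b₁ * b₂ := hbb
        rw [hb₁1, one_mul] at h4
        exact h4.symm
      constructor
      · rw [← hb₂s]
        exact h1
      · have h2' : bruhatLE cs (r * b₂⁻¹) (w * b₁) := h2
        rw [heqw, hb₂s] at h2'
        exact h2'
  have hbuild : ∀ r s x' u' : W, s ∈ parabolic cs J →
      bruhatLE cs (x' * u'⁻¹) (r * s⁻¹) → bruhatLE cs (r * s⁻¹) w →
      cellLE cs J (r, s, w) (x', u', w) := by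
    intro r s x' u' hs h1 h2
    right
    refine ⟨1, s, Subgroup.one_mem _, hs, (one_mul s).symm, by simp, h1, ?_, ?_⟩
    · show bruhatLE cs (r * s⁻¹) (w * 1)
      rwa [mul_one]
    · show bruhatLE cs (w * 1) w
      rw [mul_one]
      exact bruhatLE_refl cs w
  rcases hcore a b x u hle with ⟨h1, h2⟩ | ⟨hxu_ab, hab_w⟩
  · exact absurd (by rw [h1, h2]) hne3
  have hinj : ∀ r s x' u' : W, r ∈ maxReps cs J u₀ → x' ∈ maxReps cs J u₀ →
      s ∈ parabolic cs J → u' ∈ parabolic cs J → r * s⁻¹ = x' * u'⁻¹ →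
      r = x' ∧ s = u' := by
    intro r s x' u' hr hx' hs hu' heq
    obtain ⟨r₁, hr₁min, rfl⟩ := hr
    obtain ⟨x₁, hx₁min, rfl⟩ := hx'
    have hu₀J : u₀ ∈ parabolic cs J := hu₀.1
    have hfac : x₁ = r₁ * (u₀ * s⁻¹ * u' * u₀⁻¹) := by
      have h9 := congrArg (fun z => z * (u' * u₀⁻¹)) heq
      have h10 : x₁ * u₀ * u'⁻¹ * (u' * u₀⁻¹) = x₁ := by group
      rw [h10] at h9
      rw [← h9]
      group
    have hpar : u₀ * s⁻¹ * u' * u₀⁻¹ ∈ parabolic cs J :=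
      Subgroup.mul_mem _
        (Subgroup.mul_mem _ (Subgroup.mul_mem _ hu₀J (Subgroup.inv_mem _ hs)) hu')
        (Subgroup.inv_mem _ hu₀J)
    have h1 : u₀ * s⁻¹ * u' * u₀⁻¹ = 1 := by
      apply minRep_unique cs J hr₁min hpar
      rw [← hfac]
      exact hx₁min
    have hr₁x : x₁ = r₁ := by rw [hfac, h1, mul_one]
    have hsu : s = u' := by
      have h2 : s⁻¹ * u' = 1 := by
        have h3 := congrArg (fun z => u₀⁻¹ * z * u₀) h1
        rw [mul_one, inv_mul_cancel] at h3
        rw [← h3]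
        group
      exact (inv_mul_eq_one.mp h2)
    exact ⟨by rw [hr₁x], hsu⟩
  set T : Set (W × W) := {p | (p.1, p.2, w) ∈ IndexSet cs J u₀ ∧
      cellLE cs J (a, b, w) (p.1, p.2, w) ∧ cellLE cs J (p.1, p.2, w) (x, u, w) ∧
      (p.1, p.2) ≠ (x, u)} with hT
  have hTab : (a, b) ∈ T := by
    refine ⟨habw, Or.inl rfl, hle, ?_⟩
    intro h
    exact hne3 (congrArg (fun p : W × W => (p.1, p.2, w)) h)
  have hNne : {n | ∃ p ∈ T, cs.length (p.1 * p.2⁻¹) = n}.Nonempty := ⟨_, (a, b), hTab, rfl⟩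
  obtain ⟨p₀, hp₀T, hp₀len⟩ := Nat.sInf_mem hNne
  obtain ⟨r, s⟩ := p₀
  have hmin : ∀ q ∈ T, cs.length (r * s⁻¹) ≤ cs.length (q.1 * q.2⁻¹) := by
    intro q hq
    rw [hp₀len]
    exact Nat.sInf_le ⟨q, hq, rfl⟩
  obtain ⟨hrsI, hars, hrsxu, hrsne⟩ := hp₀T
  rcases hcore r s x u hrsxu with ⟨h1, h2⟩ | ⟨hA, hB⟩
  · exact absurd (by rw [h1, h2]) hrsne
  have hrs_ab : bruhatLE cs (r * s⁻¹) (a * b⁻¹) := by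
    rcases hcore a b r s hars with ⟨h1, h2⟩ | ⟨hh, _⟩
    · rw [← h1, ← h2]
      exact bruhatLE_refl cs _
    · exact hh
  refine ⟨r, s, hrsI.1, hrsI.2.1, hrsI, hars, ?_⟩
  refine ⟨hrsI, hxuw, ⟨hrsxu, ?_⟩, ?_⟩
  · intro h
    apply hrsne
    have h2 := Option.some_injective _ h
    exact congrArg (fun t : W × W × W => (t.1, t.2.1)) h2
  · intro z hz h1z h2z
    cases z with
    | none => exact h1z.1
    | some t =>
      obtain ⟨x', t2⟩ := t
      obtain ⟨u', c'⟩ := t2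
      have hzI : (x', u', c') ∈ IndexSet cs J u₀ := hz
      obtain ⟨hcell1, hne1⟩ := h1z
      obtain ⟨hcell2, hne2⟩ := h2z
      rcases hcell1 with heq | ⟨d₁, d₂, hd₁, hd₂, hsd, _, hP1, hP2, hP3⟩
      · exact hne1 (by rw [heq])
      rcases hcell2 with heq | ⟨e₁, e₂, he₁, he₂, hue, _, hQ1, hQ2, hQ3⟩
      · exact hne2 (by rw [heq])
      have hP3' : bruhatLE cs (w * d₁) c' := hP3
      have hQ3' : bruhatLE cs (c' * e₁) w := hQ3
      have l1 : cs.length w ≤ cs.length (w * d₁) := hwmin d₁ hd₁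
      have l2 : cs.length (w * d₁) ≤ cs.length c' := bruhatLE_length_le cs hP3'
      have l3 : cs.length c' ≤ cs.length (c' * e₁) := hzI.2.2.1 e₁ he₁
      have l4 : cs.length (c' * e₁) ≤ cs.length w := bruhatLE_length_le cs hQ3'
      have heqc : w * d₁ = c' := bruhatLE_eq_of_length_ge cs hP3' (by omega)
      have heqw2 : c' * e₁ = w := bruhatLE_eq_of_length_ge cs hQ3' (by omega)
      have hadd := minRep_length_add cs J hwmin hd₁
      have hd₁0 : cs.length d₁ = 0 := by
        have l5 : cs.length (w * d₁) = cs.length c' := by omega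
        omega
      have hd₁1 : d₁ = 1 := cs.length_eq_zero_iff.mp hd₁0
      have hcw : c' = w := by rw [← heqc, hd₁1, mul_one]
      have he₁1 : e₁ = 1 := by
        have h5 : c' * e₁ = c' * 1 := by
          rw [mul_one]
          exact heqw2.trans hcw.symm
        exact mul_left_cancel h5
      have hd₂s : d₂ = s := by
        have h4 : s = d₁ * d₂ := hsd
        rw [hd₁1, one_mul] at h4
        exact h4.symm
      have he₂u : e₂ = u' := by
        have h4 : u' = e₁ * e₂ := hue
        rw [he₁1, one_mul] at h4
        exact h4.symm
      have hP1' : bruhatLE cs (x' * u'⁻¹) (r * s⁻¹) := by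
        have h4 : bruhatLE cs (x' * u'⁻¹) (r * d₂⁻¹) := hP1
        rwa [hd₂s] at h4
      have hQ1' : bruhatLE cs (x * u⁻¹) (x' * u'⁻¹) := by
        have h4 : bruhatLE cs (x * u⁻¹) (x' * e₂⁻¹) := hQ1
        rwa [he₂u] at h4
      have hQ2' : bruhatLE cs (x' * u'⁻¹) w := by
        have h4 : bruhatLE cs (x' * e₂⁻¹) (c' * e₁) := hQ2
        rwa [he₂u, heqw2] at h4
      have hyI : (x', u', w) ∈ IndexSet cs J u₀ := by
        rw [← hcw]
        exact hzI
      have hyT : (x', u') ∈ T := by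
        refine ⟨hyI, ?_, ?_, ?_⟩
        · exact hbuild a b x' u' habw.2.1
            (bruhatLE_trans cs hP1' hrs_ab) hab_w
        · exact hbuild x' u' x u hzI.2.1 hQ1' hQ2'
        · intro h
          apply hne2
          have h6 : (x', u', c') = (x, u, w) := by
            rw [hcw]
            exact congrArg (fun p : W × W => (p.1, p.2, w)) h
          rw [h6]
      have hmin1 := hmin (x', u') hyT
      have hmin2 : cs.length (x' * u'⁻¹) ≤ cs.length (r * s⁻¹) := bruhatLE_length_le cs hP1'
      have heq3 : x' * u'⁻¹ = r * s⁻¹ := bruhatLE_eq_of_length_ge cs hP1' (by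
        dsimp only at hmin1
        omega)
      obtain ⟨hx'r, hu's⟩ := hinj x' u' r s hzI.1 hrsI.1 hzI.2.1 hrsI.2.1 heq3
      apply hne1
      rw [hx'r, hu's, hcw]

end TNNFlag
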